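/- Suppose q* ∈ ℝ^{𝒜×𝒳} is a fixed point of G, i.e., G(q*) = q*, and let Ω = { q : ‖q − q*‖_∞ ≤ r } for some r > 0. Then G maps Ω into Ω and is a contraction on Ω in the ℓ∞-norm (there exists K < 1 with ‖G(q¹) − G(q²)‖_∞ ≤ K ‖q¹ − q²‖_∞ for all q¹, q² ∈ Ω); consequently q* is the unique fixed point of G in Ω and, for any starting point q⁽⁰⁾ with ‖q⁽⁰⁾ − q*‖_∞ < r, the fixed-point iteration q⁽ᵏ⁺¹⁾ = G(q⁽ᵏ⁾) converges to q*. -/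

import Mathlib

open Finset

noncomputable section

/-- A probability mass function on a finite alphabet. -/
def IsPMF {α : Type} [Fintype α] (p : α → ℝ) : Prop :=
  (∀ a, 0 ≤ p a) ∧ ∑ a, p a = 1

variable {X Y A : Type} [Fintype X] [Fintype Y] [Fintype A]
  [DecidableEq X] [DecidableEq Y] [DecidableEq A]

/-- The map `H_{a|x}(q) = log₂( 2^{μ_x} α_{a,x} /
Π_y [ Σ_x̃ P_X(x̃) P_{Y|X,A}(y|x̃,a) 2^{q_{a|x̃}} ]^{P_{Y|X,A}(y|x,a)} )`. -/
def Hfun (PX : X → ℝ) (PW : A → X → Y → ℝ) (μ : X → ℝ) (α : A → X → ℝ)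
    (q : A × X → ℝ) (a : A) (x : X) : ℝ :=
  Real.logb 2 ((2 : ℝ) ^ (μ x) * α a x /
    ∏ y, (∑ xt, PX xt * PW a xt y * (2 : ℝ) ^ (q (a, xt))) ^ (PW a x y))

/-- The claimed partial derivative `∂H_{ã|x̃}/∂q_{a'|x'}`. -/
def Hpd (PX : X → ℝ) (PW : A → X → Y → ℝ) (q : A × X → ℝ)
    (at' : A) (xt' : X) (a' : A) (x' : X) : ℝ :=
  -(if at' = a' then (1 : ℝ) else 0) * ∑ y, PW at' xt' y *
    (PX x' * PW a' x' y * (2 : ℝ) ^ (q (a', x')) /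
      (∑ x, PX x * PW at' x y * (2 : ℝ) ^ (q (at', x))))
/-- The map `G : ℝ^{A×X} → ℝ^{A×X}` with components
`G_{a|x}(q) = β q_{a|x} + (1−β) H_{a|x}(q)`. -/
def Gmap (PX : X → ℝ) (PW : A → X → Y → ℝ) (μ : X → ℝ) (α : A → X → ℝ) (β : ℝ)
    (q : A × X → ℝ) : A × X → ℝ :=
  fun p => β * q p + (1 - β) * Hfun PX PW μ α q p.1 p.2

/-- The claimed partial derivative `∂G_{ã|x̃}/∂q_{a'|x'}`. -/
def Gpd (PX : X → ℝ) (PW : A → X → Y → ℝ) (β : ℝ) (q : A × X → ℝ)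
    (at' : A) (xt' : X) (a' : A) (x' : X) : ℝ :=
  β * (if (at', xt') = (a', x') then (1 : ℝ) else 0) +
    (1 - β) * Hpd PX PW q at' xt' a' x'

end

open Real

/-! Write `D_y(q) = Σ_x̃ P_X(x̃) P(y|x̃,a) 2^{q_{a|x̃}}` (`tiltedMass`),
`t = q¹_{a|x} - q²_{a|x}` and `N = ‖q¹ - q²‖`. The `(a, x)` component of `G q¹ - G q²` is
`β t - (1 - β) Σ_y P(y|x,a) log₂ (D_y(q¹) / D_y(q²))`. The ratio `D_y(q¹) / D_y(q²)` is the mean of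
`2^{q¹ - q²}` under the tilted weights of `q²`, so by Jensen its logarithm is at least
`-N + w (t + N)`, where `w ≥ ε` is the weight of `x`; exchanging `q¹` and `q²` gives the matching
upper bound `N - ε (N - t)`. On the ball of radius `r` the tilted weights are at least `4^{-r}`
times those at `q*`, which gives a uniform `ε > 0` and the contraction factor
`max (1 - 2 (1 - β) ε) |1 - 2 β|`. A contraction of a ball that fixes its centre maps the ball
into itself, has no other fixed point there, and its iterates converge geometrically. -/

theorem Finset.exists_pos_forall_le {ι : Type*} (s : Finset ι) (f : ι → ℝ)
    (hf : ∀ i ∈ s, 0 < f i) : ∃ ε > 0, ∀ i ∈ s, ε ≤ f i := by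
  rcases s.eq_empty_or_nonempty with rfl | hs
  · exact ⟨1, one_pos, by simp⟩
  · obtain ⟨i, hi, hmin⟩ := s.exists_min_image f hs
    exact ⟨f i, hf i hi, hmin⟩

theorem abs_apply_sub_apply_le_norm {ι : Type*} [Fintype ι] (q q' : ι → ℝ) (i : ι) :
    |q i - q' i| ≤ ‖q - q'‖ :=
  norm_le_pi_norm (q - q') i

section WeightedMeans

variable {ι : Type*} (s : Finset ι) {w : ι → ℝ}

theorem sum_mul_le_logb_sum_mul_rpow (z : ι → ℝ) (hw : ∀ i ∈ s, 0 ≤ w i)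
    (hw1 : ∑ i ∈ s, w i = 1) :
    ∑ i ∈ s, w i * z i ≤ logb 2 (∑ i ∈ s, w i * 2 ^ z i) := by
  have hJensen := (convexOn_rpow_left two_pos).map_sum_le hw hw1 (fun i _ => Set.mem_univ (z i))
  simp only [smul_eq_mul] at hJensen
  calc ∑ i ∈ s, w i * z i = logb 2 (2 ^ ∑ i ∈ s, w i * z i) :=
        (logb_rpow two_pos (by norm_num)).symm
    _ ≤ _ := logb_le_logb_of_le one_lt_two (by positivity) hJensen

theorem neg_add_mul_le_sum_mul {z : ι → ℝ} {N : ℝ} {j : ι} (hj : j ∈ s)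
    (hw : ∀ i ∈ s, 0 ≤ w i) (hw1 : ∑ i ∈ s, w i = 1) (hz : ∀ i ∈ s, -N ≤ z i) :
    -N + w j * (z j + N) ≤ ∑ i ∈ s, w i * z i := by
  have hj_le : w j * (z j + N) ≤ ∑ i ∈ s, w i * (z i + N) :=
    single_le_sum (f := fun i => w i * (z i + N))
      (fun i hi => mul_nonneg (hw i hi) (by linarith [hz i hi])) hj
  have hsum : ∑ i ∈ s, w i * (z i + N) = ∑ i ∈ s, w i * z i + N := by
    simp only [mul_add, sum_add_distrib, ← sum_mul, hw1, one_mul]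
  linarith

theorem sum_mul_mem_Icc {v : ι → ℝ} {a b : ℝ} (hw : ∀ i ∈ s, 0 ≤ w i)
    (hw1 : ∑ i ∈ s, w i = 1) (hv : ∀ i ∈ s, 0 < w i → v i ∈ Set.Icc a b) :
    ∑ i ∈ s, w i * v i ∈ Set.Icc a b := by
  have hterm : ∀ i ∈ s, w i * a ≤ w i * v i ∧ w i * v i ≤ w i * b := by
    intro i hi
    rcases (hw i hi).eq_or_lt with h0 | hpos
    · simp [← h0]
    · exact ⟨mul_le_mul_of_nonneg_left (hv i hi hpos).1 hpos.le,
        mul_le_mul_of_nonneg_left (hv i hi hpos).2 hpos.le⟩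
  have hconst : ∀ c, ∑ i ∈ s, w i * c = c := fun c => by rw [← sum_mul, hw1, one_mul]
  exact ⟨hconst a ▸ sum_le_sum fun i hi => (hterm i hi).1,
    hconst b ▸ sum_le_sum fun i hi => (hterm i hi).2⟩

end WeightedMeans

theorem abs_mul_sub_mul_le {β e t θ N : ℝ} (hβ : β ≤ 1) (ht : |t| ≤ N)
    (hlo : -N + e * (t + N) ≤ θ) (hhi : θ ≤ N - e * (N - t)) :
    |β * t - (1 - β) * θ| ≤ max (1 - 2 * (1 - β) * e) |1 - 2 * β| * N := by
  have hc : 0 ≤ 1 - β := by linarith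
  have hθlo := mul_le_mul_of_nonneg_left hlo hc
  have hθhi := mul_le_mul_of_nonneg_left hhi hc
  obtain ⟨htlo, hthi⟩ := abs_le.mp ht
  have hN : 0 ≤ N := (abs_nonneg t).trans ht
  rw [abs_le]
  -- `t` enters both bounds with coefficient `β - (1 - β) e`: split on its sign.
  rcases le_total ((1 - β) * e) β with hsgn | hsgn
  · have hK := mul_le_mul_of_nonneg_right
      (le_max_left (1 - 2 * (1 - β) * e) |1 - 2 * β|) hN
    constructor <;> nlinarith
  · have hK := mul_le_mul_of_nonneg_right
      ((le_abs_self _).trans (le_max_right (1 - 2 * (1 - β) * e) |1 - 2 * β|)) hN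
    constructor <;> nlinarith

noncomputable section TiltedWeights

variable {X Y A : Type} [Fintype X] {PX : X → ℝ} {PW : A → X → Y → ℝ}

variable (PX PW) in
def tiltedMass (q : A × X → ℝ) (a : A) (y : Y) : ℝ :=
  ∑ x, PX x * PW a x y * 2 ^ q (a, x)

variable (PX PW) in
def tiltedWeight (q : A × X → ℝ) (a : A) (y : Y) (x : X) : ℝ :=
  PX x * PW a x y * 2 ^ q (a, x) / tiltedMass PX PW q a y

theorem tiltedMass_pos (hPX : ∀ x, 0 < PX x) (hPW : ∀ a x y, 0 ≤ PW a x y)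
    (q : A × X → ℝ) {a : A} {x : X} {y : Y} (h : 0 < PW a x y) :
    0 < tiltedMass PX PW q a y := by
  have hterm : 0 < PX x * PW a x y * 2 ^ q (a, x) := by have := hPX x; positivity
  exact hterm.trans_le <| single_le_sum (f := fun x' => PX x' * PW a x' y * 2 ^ q (a, x'))
    (fun x' _ => by have := hPX x'; have := hPW a x' y; positivity) (mem_univ x)

theorem tiltedWeight_pos (hPX : ∀ x, 0 < PX x) (hPW : ∀ a x y, 0 ≤ PW a x y)
    (q : A × X → ℝ) {a : A} {x : X} {y : Y} (h : 0 < PW a x y) :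
    0 < tiltedWeight PX PW q a y x := by
  have := hPX x
  have := tiltedMass_pos hPX hPW q h
  unfold tiltedWeight
  positivity

theorem tiltedWeight_nonneg (hPX : ∀ x, 0 < PX x) (hPW : ∀ a x y, 0 ≤ PW a x y)
    (q : A × X → ℝ) (a : A) (y : Y) (x : X) : 0 ≤ tiltedWeight PX PW q a y x := by
  have := hPX x
  have := hPW a x y
  have : 0 ≤ tiltedMass PX PW q a y :=
    sum_nonneg fun x' _ => by have := hPX x'; have := hPW a x' y; positivity
  unfold tiltedWeight
  positivity

theorem sum_tiltedWeight (hPX : ∀ x, 0 < PX x) (hPW : ∀ a x y, 0 ≤ PW a x y)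
    (q : A × X → ℝ) {a : A} {x : X} {y : Y} (h : 0 < PW a x y) :
    ∑ x', tiltedWeight PX PW q a y x' = 1 := by
  simp only [tiltedWeight]
  rw [← sum_div]
  exact div_self (tiltedMass_pos hPX hPW q h).ne'

theorem tiltedMass_div_tiltedMass (q₁ q₂ : A × X → ℝ) (a : A) (y : Y) :
    tiltedMass PX PW q₁ a y / tiltedMass PX PW q₂ a y =
      ∑ x, tiltedWeight PX PW q₂ a y x * 2 ^ (q₁ (a, x) - q₂ (a, x)) := by
  rw [tiltedMass, sum_div]
  refine sum_congr rfl fun x _ => ?_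
  rw [tiltedWeight, rpow_sub two_pos]
  field_simp

theorem neg_add_mul_le_logb_tiltedMass_sub (hPX : ∀ x, 0 < PX x) (hPW : ∀ a x y, 0 ≤ PW a x y)
    {q₁ q₂ : A × X → ℝ} {a : A} {x : X} {y : Y} {N : ℝ} (h : 0 < PW a x y)
    (hN : ∀ x', -N ≤ q₁ (a, x') - q₂ (a, x')) :
    -N + tiltedWeight PX PW q₂ a y x * (q₁ (a, x) - q₂ (a, x) + N) ≤
      logb 2 (tiltedMass PX PW q₁ a y) - logb 2 (tiltedMass PX PW q₂ a y) := by
  rw [← logb_div (tiltedMass_pos hPX hPW q₁ h).ne' (tiltedMass_pos hPX hPW q₂ h).ne',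
    tiltedMass_div_tiltedMass]
  have hw := fun x' (_ : x' ∈ univ) => tiltedWeight_nonneg hPX hPW q₂ a y x'
  have hw1 := sum_tiltedWeight hPX hPW q₂ h
  exact (neg_add_mul_le_sum_mul univ (mem_univ x) hw hw1 fun x' _ => hN x').trans
    (sum_mul_le_logb_sum_mul_rpow univ _ hw hw1)

theorem logb_tiltedMass_sub_mem_Icc [Fintype A] (hPX : ∀ x, 0 < PX x) (hPW : ∀ a x y, 0 ≤ PW a x y)
    {q₁ q₂ : A × X → ℝ} {a : A} {x : X} {y : Y} {ε N : ℝ} (h : 0 < PW a x y)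
    (hε₁ : ε ≤ tiltedWeight PX PW q₁ a y x) (hε₂ : ε ≤ tiltedWeight PX PW q₂ a y x)
    (hN : ‖q₁ - q₂‖ ≤ N) :
    logb 2 (tiltedMass PX PW q₁ a y) - logb 2 (tiltedMass PX PW q₂ a y) ∈
      Set.Icc (-N + ε * (q₁ (a, x) - q₂ (a, x) + N)) (N - ε * (N - (q₁ (a, x) - q₂ (a, x)))) := by
  have hd : ∀ x', |q₁ (a, x') - q₂ (a, x')| ≤ N :=
    fun x' => (abs_apply_sub_apply_le_norm q₁ q₂ (a, x')).trans hN
  have hlo := neg_add_mul_le_logb_tiltedMass_sub hPX hPW h fun x' => (abs_le.mp (hd x')).1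
  have hhi := neg_add_mul_le_logb_tiltedMass_sub (q₁ := q₂) (q₂ := q₁) (N := N) hPX hPW h
    fun x' => by linarith [(abs_le.mp (hd x')).2]
  obtain ⟨htlo, hthi⟩ := abs_le.mp (hd x)
  constructor
  · nlinarith [mul_le_mul_of_nonneg_right hε₂ (by linarith : 0 ≤ q₁ (a, x) - q₂ (a, x) + N)]
  · nlinarith [mul_le_mul_of_nonneg_right hε₁ (by linarith : 0 ≤ q₂ (a, x) - q₁ (a, x) + N)]

end TiltedWeights

section TiltedWeightsOnBall

variable {X Y A : Type} [Fintype X] [Fintype A] {PX : X → ℝ} {PW : A → X → Y → ℝ}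

theorem tiltedMass_le_of_norm_sub_le (hPX : ∀ x, 0 < PX x) (hPW : ∀ a x y, 0 ≤ PW a x y)
    {q q' : A × X → ℝ} {s : ℝ} (hq : ‖q - q'‖ ≤ s) (a : A) (y : Y) :
    tiltedMass PX PW q a y ≤ 2 ^ s * tiltedMass PX PW q' a y := by
  rw [tiltedMass, tiltedMass, mul_sum]
  refine sum_le_sum fun x _ => ?_
  have hexp : 2 ^ q (a, x) ≤ (2 : ℝ) ^ (s + q' (a, x)) :=
    rpow_le_rpow_of_exponent_le one_le_two
      (by linarith [(abs_le.mp ((abs_apply_sub_apply_le_norm q q' (a, x)).trans hq)).2])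
  rw [rpow_add two_pos] at hexp
  calc PX x * PW a x y * 2 ^ q (a, x) ≤ PX x * PW a x y * (2 ^ s * 2 ^ q' (a, x)) :=
        mul_le_mul_of_nonneg_left hexp (mul_nonneg (hPX x).le (hPW a x y))
    _ = 2 ^ s * (PX x * PW a x y * 2 ^ q' (a, x)) := by ring

theorem rpow_neg_two_mul_mul_tiltedWeight_le (hPX : ∀ x, 0 < PX x) (hPW : ∀ a x y, 0 ≤ PW a x y)
    {q q' : A × X → ℝ} {s : ℝ} (hq : ‖q - q'‖ ≤ s) {a : A} {x : X} {y : Y} (h : 0 < PW a x y) :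
    2 ^ (-(2 * s)) * tiltedWeight PX PW q' a y x ≤ tiltedWeight PX PW q a y x := by
  have hnum : 2 ^ (-s) * (PX x * PW a x y * 2 ^ q' (a, x)) ≤ PX x * PW a x y * 2 ^ q (a, x) := by
    have hexp : (2 : ℝ) ^ (-s + q' (a, x)) ≤ 2 ^ q (a, x) :=
      rpow_le_rpow_of_exponent_le one_le_two
        (by linarith [(abs_le.mp ((abs_apply_sub_apply_le_norm q q' (a, x)).trans hq)).1])
    rw [rpow_add two_pos] at hexp
    calc 2 ^ (-s) * (PX x * PW a x y * 2 ^ q' (a, x))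
        = PX x * PW a x y * (2 ^ (-s) * 2 ^ q' (a, x)) := by ring
      _ ≤ PX x * PW a x y * 2 ^ q (a, x) :=
        mul_le_mul_of_nonneg_left hexp (mul_nonneg (hPX x).le h.le)
  have hsplit : (2 : ℝ) ^ (-(2 * s)) = 2 ^ (-s) / 2 ^ s := by
    rw [← rpow_sub two_pos]
    ring_nf
  rw [tiltedWeight, tiltedWeight, hsplit, ← mul_div_mul_comm]
  have := hPX x
  exact div_le_div₀ (by positivity) hnum (tiltedMass_pos hPX hPW q h)
    (tiltedMass_le_of_norm_sub_le hPX hPW hq a y)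

theorem exists_pos_le_tiltedWeight_of_norm_sub_le [Fintype Y]
    (hPX : ∀ x, 0 < PX x) (hPW : ∀ a x y, 0 ≤ PW a x y) (qstar : A × X → ℝ) (r : ℝ) :
    ∃ ε > 0, ∀ q : A × X → ℝ, ‖q - qstar‖ ≤ r →
      ∀ a x y, 0 < PW a x y → ε ≤ tiltedWeight PX PW q a y x := by
  obtain ⟨ε, hε, hle⟩ := Finset.exists_pos_forall_le
    (univ.filter fun p : A × X × Y => 0 < PW p.1 p.2.1 p.2.2)
    (fun p => tiltedWeight PX PW qstar p.1 p.2.2 p.2.1)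
    fun p hp => tiltedWeight_pos hPX hPW qstar (mem_filter.mp hp).2
  refine ⟨2 ^ (-(2 * r)) * ε, by positivity, fun q hq a x y h => ?_⟩
  calc 2 ^ (-(2 * r)) * ε ≤ 2 ^ (-(2 * r)) * tiltedWeight PX PW qstar a y x :=
        mul_le_mul_of_nonneg_left (hle (a, x, y) (mem_filter.mpr ⟨mem_univ _, h⟩)) (by positivity)
    _ ≤ _ := rpow_neg_two_mul_mul_tiltedWeight_le hPX hPW hq h

end TiltedWeightsOnBall

section Gmap

variable {X Y A : Type} [Fintype X] [Fintype Y] {PX : X → ℝ} {PW : A → X → Y → ℝ}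
  {μ : X → ℝ} {α : A → X → ℝ}

theorem Hfun_eq (hPX : ∀ x, 0 < PX x) (hPW : ∀ a x y, 0 ≤ PW a x y) (q : A × X → ℝ)
    {a : A} {x : X} (hα : α a x ≠ 0) :
    Hfun PX PW μ α q a x =
      logb 2 (2 ^ μ x * α a x) - ∑ y, PW a x y * logb 2 (tiltedMass PX PW q a y) := by
  have hfactor : ∀ y, 0 < tiltedMass PX PW q a y ^ PW a x y := fun y => by
    rcases (hPW a x y).eq_or_lt with h0 | hpos
    · simp [← h0]
    · exact rpow_pos_of_pos (tiltedMass_pos hPX hPW q hpos) _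
  have hlogb : ∀ y, logb 2 (tiltedMass PX PW q a y ^ PW a x y) =
      PW a x y * logb 2 (tiltedMass PX PW q a y) := fun y => by
    rcases (hPW a x y).eq_or_lt with h0 | hpos
    · simp [← h0]
    · simp only [logb, log_rpow (tiltedMass_pos hPX hPW q hpos)]
      ring
  change logb 2 (2 ^ μ x * α a x / ∏ y, tiltedMass PX PW q a y ^ PW a x y) = _
  rw [logb_div (by positivity) (prod_pos fun y _ => hfactor y).ne',
    logb_prod _ _ fun y _ => (hfactor y).ne']
  simp only [hlogb]

theorem Gmap_sub_Gmap_apply (hPX : ∀ x, 0 < PX x) (hPW : ∀ a x y, 0 ≤ PW a x y)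
    (hα : ∀ a x, α a x ≠ 0) (β : ℝ) (q₁ q₂ : A × X → ℝ) (a : A) (x : X) :
    (Gmap PX PW μ α β q₁ - Gmap PX PW μ α β q₂) (a, x) =
      β * (q₁ (a, x) - q₂ (a, x)) - (1 - β) * ∑ y, PW a x y *
        (logb 2 (tiltedMass PX PW q₁ a y) - logb 2 (tiltedMass PX PW q₂ a y)) := by
  simp only [Pi.sub_apply, Gmap, Hfun_eq hPX hPW _ (hα a x), mul_sub, sum_sub_distrib]
  ring

theorem norm_Gmap_sub_Gmap_le [Fintype A] (hPX : ∀ x, 0 < PX x)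
    (hPW : ∀ a x, IsPMF (PW a x)) (hα : ∀ a x, α a x ≠ 0) {β ε : ℝ} (hβ : β ≤ 1)
    {q₁ q₂ : A × X → ℝ}
    (hε : ∀ a x y, 0 < PW a x y →
      ε ≤ tiltedWeight PX PW q₁ a y x ∧ ε ≤ tiltedWeight PX PW q₂ a y x) :
    ‖Gmap PX PW μ α β q₁ - Gmap PX PW μ α β q₂‖ ≤
      max (1 - 2 * (1 - β) * ε) |1 - 2 * β| * ‖q₁ - q₂‖ := by
  have hPW₀ : ∀ a x y, 0 ≤ PW a x y := fun a x => (hPW a x).1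
  have hK : 0 ≤ max (1 - 2 * (1 - β) * ε) |1 - 2 * β| := (abs_nonneg _).trans (le_max_right _ _)
  rw [pi_norm_le_iff_of_nonneg (mul_nonneg hK (norm_nonneg _))]
  rintro ⟨a, x⟩
  have hθ := sum_mul_mem_Icc univ (fun y _ => hPW₀ a x y) (hPW a x).2 fun y _ h =>
    logb_tiltedMass_sub_mem_Icc hPX hPW₀ h (hε a x y h).1 (hε a x y h).2 le_rfl
  rw [Gmap_sub_Gmap_apply hPX hPW₀ hα, Real.norm_eq_abs]
  exact abs_mul_sub_mul_le hβ (abs_apply_sub_apply_le_norm q₁ q₂ (a, x)) hθ.1 hθ.2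

end Gmap

section ContractionOnBall

variable {E : Type*} [NormedAddCommGroup E]

def ContractsBall (f : E → E) (c : E) (r K : ℝ) : Prop :=
  ∀ x, ‖x - c‖ ≤ r → ∀ y, ‖y - c‖ ≤ r → ‖f x - f y‖ ≤ K * ‖x - y‖

namespace ContractsBall

variable {f : E → E} {c x : E} {r K : ℝ}

theorem norm_apply_sub_le (hf : ContractsBall f c r K) (hfc : f c = c) (hx : ‖x - c‖ ≤ r) :
    ‖f x - c‖ ≤ K * ‖x - c‖ := by
  simpa only [hfc] using hf x hx c (by simpa using (norm_nonneg _).trans hx)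

theorem mapsTo (hf : ContractsBall f c r K) (hfc : f c = c) (hK₁ : K ≤ 1) :
    Set.MapsTo f {x | ‖x - c‖ ≤ r} {x | ‖x - c‖ ≤ r} := fun x hx =>
  calc ‖f x - c‖ ≤ K * ‖x - c‖ := hf.norm_apply_sub_le hfc hx
    _ ≤ 1 * r := mul_le_mul hK₁ hx (norm_nonneg _) zero_le_one
    _ = r := one_mul r

theorem eq_of_apply_eq (hf : ContractsBall f c r K) (hfc : f c = c) (hK₁ : K < 1)
    (hx : ‖x - c‖ ≤ r) (hfx : f x = x) : x = c := by
  have h := hf.norm_apply_sub_le hfc hx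
  rw [hfx] at h
  have : ‖x - c‖ = 0 := by nlinarith [norm_nonneg (x - c)]
  exact sub_eq_zero.mp (norm_eq_zero.mp this)

theorem norm_iterate_sub_le (hf : ContractsBall f c r K) (hfc : f c = c) (hK₀ : 0 ≤ K)
    (hK₁ : K ≤ 1) (hx : ‖x - c‖ ≤ r) (k : ℕ) : ‖f^[k] x - c‖ ≤ K ^ k * ‖x - c‖ := by
  induction k with
  | zero => simp
  | succ k ih =>
    have hk : ‖f^[k] x - c‖ ≤ r :=
      ih.trans (mul_le_of_le_one_left (norm_nonneg _) (pow_le_one₀ hK₀ hK₁) |>.trans hx)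
    calc ‖f^[k + 1] x - c‖ ≤ K * ‖f^[k] x - c‖ := by
          rw [Function.iterate_succ_apply']
          exact hf.norm_apply_sub_le hfc hk
      _ ≤ K * (K ^ k * ‖x - c‖) := mul_le_mul_of_nonneg_left ih hK₀
      _ = K ^ (k + 1) * ‖x - c‖ := by ring

theorem tendsto_iterate (hf : ContractsBall f c r K) (hfc : f c = c) (hK₀ : 0 ≤ K)
    (hK₁ : K < 1) (hx : ‖x - c‖ ≤ r) :
    Filter.Tendsto (fun k => f^[k] x) Filter.atTop (nhds c) := by
  rw [tendsto_iff_norm_sub_tendsto_zero]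
  refine squeeze_zero (fun k => norm_nonneg _) (hf.norm_iterate_sub_le hfc hK₀ hK₁.le hx) ?_
  simpa using (tendsto_pow_atTop_nhds_zero_of_lt_one hK₀ hK₁).mul_const ‖x - c‖

end ContractsBall

end ContractionOnBall

theorem Gmap_contraction_and_fixed_point_convergence_general
    {X Y A : Type} [Fintype X] [Fintype Y] [Fintype A]
    (PX : X → ℝ) (PW : A → X → Y → ℝ) (μ : X → ℝ) (α : A → X → ℝ)
    (hPXpos : ∀ x, 0 < PX x)
    (hPW : ∀ a x, IsPMF (PW a x))
    (hα : ∀ a x, 0 < α a x)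
    (β : ℝ) (hβ₀ : 0 < β) (hβ₁ : β < 1)
    (qstar : A × X → ℝ) (hfix : Gmap PX PW μ α β qstar = qstar)
    (r : ℝ) :
    Set.MapsTo (Gmap PX PW μ α β) {q | ‖q - qstar‖ ≤ r} {q | ‖q - qstar‖ ≤ r} ∧
    (∃ K : ℝ, 0 ≤ K ∧ K < 1 ∧
      ∀ q₁ ∈ {q : A × X → ℝ | ‖q - qstar‖ ≤ r},
        ∀ q₂ ∈ {q : A × X → ℝ | ‖q - qstar‖ ≤ r},
          ‖Gmap PX PW μ α β q₁ - Gmap PX PW μ α β q₂‖ ≤ K * ‖q₁ - q₂‖) ∧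
    (∀ q ∈ {q : A × X → ℝ | ‖q - qstar‖ ≤ r}, Gmap PX PW μ α β q = q → q = qstar) ∧
    (∀ q₀ : A × X → ℝ, ‖q₀ - qstar‖ < r →
      Filter.Tendsto (fun k => (Gmap PX PW μ α β)^[k] q₀) Filter.atTop (nhds qstar)) := by
  obtain ⟨ε, hε, hεle⟩ := exists_pos_le_tiltedWeight_of_norm_sub_le hPXpos
    (fun a x => (hPW a x).1) qstar r
  set K := max (1 - 2 * (1 - β) * ε) |1 - 2 * β|
  have hK₀ : 0 ≤ K := (abs_nonneg _).trans (le_max_right _ _)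
  have hK₁ : K < 1 := max_lt (by nlinarith) (abs_lt.mpr ⟨by linarith, by linarith⟩)
  have hG : ContractsBall (Gmap PX PW μ α β) qstar r K := fun q₁ h₁ q₂ h₂ =>
    norm_Gmap_sub_Gmap_le hPXpos hPW (fun a x => (hα a x).ne') hβ₁.le
      fun a x y h => ⟨hεle q₁ h₁ a x y h, hεle q₂ h₂ a x y h⟩
  exact ⟨hG.mapsTo hfix hK₁.le, ⟨K, hK₀, hK₁, hG⟩,
    fun q hq => hG.eq_of_apply_eq hfix hK₁ hq,
    fun q₀ h₀ => hG.tendsto_iterate hfix hK₀ hK₁ h₀.le⟩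

/-- If `q*` is a fixed point of `G` and `Ω` is any closed `ℓ∞`-ball of
radius `r > 0` around `q*`, then `G` maps `Ω` into `Ω` and is a contraction on `Ω` in
the `ℓ∞`-norm; consequently `q*` is the unique fixed point of `G` in `Ω`, and the
fixed-point iteration started at any `q⁰` with `‖q⁰ − q*‖_∞ < r` converges to `q*`. -/
theorem Gmap_contraction_and_fixed_point_convergence
    {X Y A : Type} [Fintype X] [Fintype Y] [Fintype A]
    [DecidableEq X] [DecidableEq Y] [DecidableEq A]
    [Nonempty X] [Nonempty Y] [Nonempty A]
    (PX : X → ℝ) (PW : A → X → Y → ℝ) (μ : X → ℝ) (α : A → X → ℝ)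
    (hPX : IsPMF PX) (hPXpos : ∀ x, 0 < PX x)
    (hPW : ∀ a x, IsPMF (PW a x))
    (hα : ∀ a x, 0 < α a x)
    (β : ℝ) (hβ₀ : 0 < β) (hβ₁ : β < 1)
    (qstar : A × X → ℝ) (hfix : Gmap PX PW μ α β qstar = qstar)
    (r : ℝ) (hr : 0 < r) :
    Set.MapsTo (Gmap PX PW μ α β) {q | ‖q - qstar‖ ≤ r} {q | ‖q - qstar‖ ≤ r} ∧
    (∃ K : ℝ, 0 ≤ K ∧ K < 1 ∧
      ∀ q₁ ∈ {q : A × X → ℝ | ‖q - qstar‖ ≤ r},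
        ∀ q₂ ∈ {q : A × X → ℝ | ‖q - qstar‖ ≤ r},
          ‖Gmap PX PW μ α β q₁ - Gmap PX PW μ α β q₂‖ ≤ K * ‖q₁ - q₂‖) ∧
    (∀ q ∈ {q : A × X → ℝ | ‖q - qstar‖ ≤ r}, Gmap PX PW μ α β q = q → q = qstar) ∧
    (∀ q₀ : A × X → ℝ, ‖q₀ - qstar‖ < r →
      Filter.Tendsto (fun k => (Gmap PX PW μ α β)^[k] q₀) Filter.atTop (nhds qstar)) :=
  Gmap_contraction_and_fixed_point_convergence_general PX PW μ α hPXpos hPW hα β hβ₀ hβ₁ qstar hfix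
    r
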